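/- arXiv:0904.3721 — 2 statements merged into one kernel-verified Lean document; each statement's English description precedes it below -/
import Mathlib

section
/- Let Ψ be a finite multiset of weights in an open half-space and let m^μ_{λ,Ψ}(q) = Σ_{w∈W} (-1)^{ℓ(w)} P_{Ψ,q}(w(λ+ρ) - (μ+ρ)) be the generalised Kostka–Foulkes polynomial. Then d/dq m^μ_{λ,Ψ}(q) = Σ_{γ∈Ψ} Σ_{n≥1} q^{n-1} m^{μ+nγ}_{λ,Ψ}(q). -/
noncomputable section
open Finset
open scoped RealInnerProductSpace

attribute [local instance] Classical.propDecidable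

/-- The finset of `ι`-tuples of naturals with sum `j`. -/
def tuples (ι : Type) [Fintype ι] (j : ℕ) : Finset (ι → ℕ) :=
  (Fintype.piFinset fun _ : ι => Finset.range (j + 1)).filter (fun c => ∑ i, c i = j)

/-- The `q`-analogue of the partition function attached to the multiset of weights
`a : ι → M`: the coefficient of `q^j` at `ν` is the number of ways to write `ν` as a sum
of `j` elements of the multiset. -/
def PPart {M : Type} [AddCommGroup M] {ι : Type} [Fintype ι] (a : ι → M) (ν : M) :
    PowerSeries ℤ :=
  PowerSeries.mk fun j => (((tuples ι j).filter (fun c => ∑ i, c i • a i = ν)).card : ℤ)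

variable (V : Type) [NormedAddCommGroup V] [InnerProductSpace ℝ V]

/-- Data of a (crystallographic, reduced) root system inside a real inner product space,
together with a linear functional `pol` (nonvanishing on roots) singling out the
positive roots. -/
structure RootSystemData where
  Δ : Finset V
  pol : V →ₗ[ℝ] ℝ
  nonzero : (0 : V) ∉ Δ
  neg_mem : ∀ α ∈ Δ, -α ∈ Δ
  reduced : ∀ α ∈ Δ, ∀ t : ℝ, t • α ∈ Δ → t = 1 ∨ t = -1
  crys : ∀ α ∈ Δ, ∀ β ∈ Δ, ∃ n : ℤ, 2 * ⟪α, β⟫ / ⟪α, α⟫ = (n : ℝ)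
  reflect_mem : ∀ α ∈ Δ, ∀ β ∈ Δ, β - (2 * ⟪α, β⟫ / ⟪α, α⟫) • α ∈ Δ
  pol_ne : ∀ α ∈ Δ, pol α ≠ 0

variable {V}

namespace RootSystemData

variable (R : RootSystemData V)

/-- The positive roots. -/
def pos : Finset V := R.Δ.filter (fun α => 0 < R.pol α)

/-- The short roots (roots of minimal length). -/
def short : Finset V := R.Δ.filter (fun α => ∀ β ∈ R.Δ, ‖α‖ ≤ ‖β‖)

/-- The long roots. -/
def long : Finset V := R.Δ.filter (fun α => ∃ β ∈ R.Δ, ‖β‖ < ‖α‖)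

/-- Short positive roots `Δ⁺_s`. -/
def posS : Finset V := R.pos ∩ R.short

/-- Long positive roots `Δ⁺_l`. -/
def posL : Finset V := R.pos ∩ R.long

/-- The simple roots: indecomposable positive roots. -/
def simples : Finset V := R.pos.filter (fun α => ¬ ∃ β ∈ R.pos, ∃ γ ∈ R.pos, β + γ = α)

/-- Short simple roots `Π_s`. -/
def simplesS : Finset V := R.simples ∩ R.short

/-- Long simple roots `Π_l`. -/
def simplesL : Finset V := R.simples ∩ R.long

/-- `ρ`, the half-sum of positive roots. -/
def rho : V := (2 : ℝ)⁻¹ • ∑ α ∈ R.pos, α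

/-- `ρ_s`, the half-sum of short positive roots. -/
def rhoS : V := (2 : ℝ)⁻¹ • ∑ α ∈ R.posS, α

/-- `ρ_l`, the half-sum of long positive roots. -/
def rhoL : V := (2 : ℝ)⁻¹ • ∑ α ∈ R.posL, α

/-- `g` is the orthogonal reflection in (the hyperplane orthogonal to) some `α ∈ S`. -/
def IsReflectionIn (S : Finset V) (g : V ≃ₗ[ℝ] V) : Prop :=
  ∃ α ∈ S, ∀ x : V, g x = x - (2 * ⟪α, x⟫ / ⟪α, α⟫) • α

/-- The Weyl group `W`, generated by all root reflections. -/
def weyl : Subgroup (V ≃ₗ[ℝ] V) := Subgroup.closure {g | IsReflectionIn R.Δ g}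

/-- `W_l`, the subgroup generated by reflections in long roots. -/
def weylL : Subgroup (V ≃ₗ[ℝ] V) := Subgroup.closure {g | IsReflectionIn R.long g}

/-- `W(Π_s)`, the subgroup generated by reflections in short simple roots. -/
def weylS : Subgroup (V ≃ₗ[ℝ] V) := Subgroup.closure {g | IsReflectionIn R.simplesS g}

/-- The length `ℓ(w)` of an element, as the number of inversions:
positive roots sent to negative roots. -/
def len (w : V ≃ₗ[ℝ] V) : ℕ := (R.pos.filter (fun α => -(w α) ∈ R.pos)).card

/-- Dominant weights. -/
def Dominant (μ : V) : Prop := ∀ α ∈ R.pos, 0 ≤ ⟪μ, α⟫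

/-- `H`-dominant weights: dominant with respect to the long positive roots. -/
def DominantL (μ : V) : Prop := ∀ α ∈ R.posL, 0 ≤ ⟪μ, α⟫

/-- The root system is irreducible. -/
def IsIrreducible : Prop :=
  ¬ ∃ S T : Finset V, S.Nonempty ∧ T.Nonempty ∧ S ∪ T = R.Δ ∧
    ∀ α ∈ S, ∀ β ∈ T, ⟪α, β⟫ = 0

/-- The root system has two root lengths. -/
def TwoLengths : Prop := ∃ α ∈ R.Δ, ∃ β ∈ R.Δ, ‖α‖ ≠ ‖β‖

/-- The roots span `V`. -/
def Spans : Prop := Submodule.span ℝ (R.Δ : Set V) = ⊤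

/-- `μ ≼ ν` in the root order: `ν - μ` is a non-negative integer combination of
positive roots. -/
def rootLE (μ ν : V) : Prop := ∃ c : R.pos → ℕ, ν - μ = ∑ α : R.pos, c α • (α : V)

/-- The generalised Kostka–Foulkes polynomial `m^μ_{λ,Ψ}(q)` attached to the multiset of
weights `a : ι → V`. -/
def genKF {ι : Type} [Fintype ι] (a : ι → V) [Fintype R.weyl] (lam mu : V) :
    PowerSeries ℤ :=
  ∑ w : R.weyl, ((-1 : ℤ) ^ R.len (w : V ≃ₗ[ℝ] V)) •
    PPart a ((w : V ≃ₗ[ℝ] V) (lam + R.rho) - (mu + R.rho))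

/-- The short `q`-analogue `m̄^μ_λ(q)`. -/
def mbar [Fintype R.weyl] (lam mu : V) : PowerSeries ℤ :=
  R.genKF (fun α : R.posS => (α : V)) lam mu

/-- Lusztig's `q`-analogue `m^μ_λ(q)`. -/
def mfull [Fintype R.weyl] (lam mu : V) : PowerSeries ℤ :=
  R.genKF (fun α : R.pos => (α : V)) lam mu

/-- The weight multiplicity `m_λ^μ` of `μ` in the simple module `V_λ`, via Kostant's
multiplicity formula (`q = 1` value of Lusztig's `q`-analogue), for the partition
function attached to an arbitrary multiset of weights `a : ι → V`. -/
def mult1 [Fintype R.weyl] {ι : Type} [Fintype ι] (a : ι → V) (lam mu : V) : ℤ :=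
  ∑ w : R.weyl, ((-1 : ℤ) ^ R.len (w : V ≃ₗ[ℝ] V)) *
    (Nat.card {c : ι → ℕ // ∑ i, c i • a i = (w : V ≃ₗ[ℝ] V) (lam + R.rho) - (mu + R.rho)} : ℤ)

/-- `e^μ`, a basis element of the group algebra of the weight lattice. -/
def expo {k : Type} [CommRing k] (μ : V) : AddMonoidAlgebra k V := AddMonoidAlgebra.single μ 1

/-- The skew-symmetrisation operator `J = Σ_{w ∈ W} (-1)^{ℓ(w)} w`. -/
def Jop {k : Type} [CommRing k] [Fintype R.weyl] (a : AddMonoidAlgebra k V) :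
    AddMonoidAlgebra k V :=
  ∑ w : R.weyl, ((-1 : ℤ) ^ R.len (w : V ≃ₗ[ℝ] V)) •
    AddMonoidAlgebra.mapDomain (⇑(w : V ≃ₗ[ℝ] V)) a

end RootSystemData

/-! Differentiating `1/∏_γ (1 - q e^γ)` in `q` multiplies it by `Σ_γ Σ_{n ≥ 1} q^{n-1} e^{nγ}`.
On coefficients: `j` times the number of size-`j` tuples `c` with `Σ cᵢ aᵢ = ν` is
`Σ_i Σ_c cᵢ = Σ_i Σ_{n ≥ 1} #{c | n ≤ cᵢ}`, and removing `n` copies of `aᵢ` matches the tuples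
with `n ≤ cᵢ` with the size-`(j - n)` tuples summing to `ν - n aᵢ`. The alternating sum over
`W` defining `m^μ_{λ,Ψ}` is linear, and shifting `μ` by `n aᵢ` shifts the argument of `P_{Ψ,q}`
by `-n aᵢ`. -/

lemma mem_tuples {ι : Type} [Fintype ι] {j : ℕ} {c : ι → ℕ} :
    c ∈ tuples ι j ↔ ∑ i, c i = j := by
  refine ⟨fun h => (mem_filter.mp h).2, fun h => mem_filter.mpr ⟨?_, h⟩⟩
  refine Fintype.mem_piFinset.mpr fun i => mem_range.mpr (Nat.lt_succ_of_le ?_)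
  exact h ▸ single_le_sum (fun _ _ => Nat.zero_le _) (mem_univ i)

lemma sum_eq_sum_Icc_card_filter_le {α : Type*} (s : Finset α) (f : α → ℕ) {m : ℕ}
    (hf : ∀ x ∈ s, f x ≤ m) :
    ∑ x ∈ s, f x = ∑ n ∈ Icc 1 m, #{x ∈ s | n ≤ f x} := by
  simp_rw [card_filter]
  rw [sum_comm]
  refine sum_congr rfl fun x hx => ?_
  have hIcc : {n ∈ Icc 1 m | n ≤ f x} = Icc 1 (f x) := by
    ext n
    simp only [mem_filter, mem_Icc]
    have := hf x hx
    omega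
  rw [← card_filter, hIcc, Nat.card_Icc, Nat.add_sub_cancel]

section WeightTuples

variable {M : Type} [AddCommGroup M] {ι : Type} [Fintype ι] (a : ι → M)

def weightTuples (j : ℕ) (ν : M) : Finset (ι → ℕ) :=
  (tuples ι j).filter (fun c => ∑ i, c i • a i = ν)

variable {a}

lemma mem_weightTuples {j : ℕ} {ν : M} {c : ι → ℕ} :
    c ∈ weightTuples a j ν ↔ ∑ i, c i = j ∧ ∑ i, c i • a i = ν := by
  rw [weightTuples, mem_filter, mem_tuples]

lemma coeff_PPart (j : ℕ) (ν : M) :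
    PowerSeries.coeff j (PPart a ν) = #(weightTuples a j ν) := by
  rw [PPart, PowerSeries.coeff_mk, weightTuples]

variable (a)

lemma mul_card_weightTuples (j : ℕ) (ν : M) :
    j * #(weightTuples a j ν) = ∑ i, ∑ c ∈ weightTuples a j ν, c i := by
  rw [sum_comm, mul_comm, ← smul_eq_mul, ← sum_const]
  exact sum_congr rfl fun c hc => (mem_weightTuples.mp hc).1.symm

lemma card_weightTuples_filter_le (j n : ℕ) (ν : M) (i : ι) :
    #{c ∈ weightTuples a (j + n) ν | n ≤ c i} = #(weightTuples a j (ν - n • a i)) := by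
  have sums_add_single (c : ι → ℕ) :
      ∑ x, (c + Pi.single i n : ι → ℕ) x = ∑ x, c x + n ∧
        ∑ x, (c + Pi.single i n : ι → ℕ) x • a x = ∑ x, c x • a x + n • a i := by
    simp [add_smul, sum_add_distrib, Pi.single_apply]
  have sub_add_single {c : ι → ℕ} (hc : n ≤ c i) : c - Pi.single i n + Pi.single i n = c := by
    refine tsub_add_cancel_of_le fun x => ?_
    rcases eq_or_ne x i with rfl | hx
    · simpa using hc
    · simp [hx]
  symm
  refine card_nbij' (· + Pi.single i n) (· - Pi.single i n) ?_ ?_ ?_ ?_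
  · intro c hc
    obtain ⟨hsize, hweight⟩ := mem_weightTuples.mp hc
    obtain ⟨hsize', hweight'⟩ := sums_add_single c
    refine mem_filter.mpr ⟨mem_weightTuples.mpr ⟨by beta_reduce; omega, ?_⟩, by simp⟩
    rw [hweight', hweight, sub_add_cancel]
  · intro c hc
    obtain ⟨hc, hni⟩ := mem_filter.mp hc
    obtain ⟨hsize, hweight⟩ := mem_weightTuples.mp hc
    obtain ⟨hsize', hweight'⟩ := sums_add_single (c - Pi.single i n)
    rw [sub_add_single hni] at hsize' hweight'
    refine mem_weightTuples.mpr ⟨by beta_reduce; omega, ?_⟩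
    rw [← hweight, hweight', add_sub_cancel_right]
  · intro c _
    exact add_tsub_cancel_right c _
  · intro c hc
    exact sub_add_single (mem_filter.mp hc).2

lemma succ_mul_card_weightTuples (j : ℕ) (ν : M) :
    (j + 1) * #(weightTuples a (j + 1) ν) =
      ∑ i, ∑ n ∈ Icc 1 (j + 1), #(weightTuples a (j + 1 - n) (ν - n • a i)) := by
  rw [mul_card_weightTuples]
  refine sum_congr rfl fun i _ => ?_
  have hbound : ∀ c ∈ weightTuples a (j + 1) ν, c i ≤ j + 1 := fun c hc =>
    (mem_weightTuples.mp hc).1 ▸ single_le_sum (fun _ _ => Nat.zero_le _) (mem_univ i)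
  rw [sum_eq_sum_Icc_card_filter_le _ _ hbound]
  refine sum_congr rfl fun n hn => ?_
  have := card_weightTuples_filter_le a (j + 1 - n) n ν i
  rwa [Nat.sub_add_cancel (mem_Icc.mp hn).2] at this

theorem derivative_PPart (ν : M) :
    PowerSeries.derivative ℤ (PPart a ν) =
      ∑ i, PowerSeries.mk fun j =>
        ∑ n ∈ Icc 1 (j + 1), PowerSeries.coeff (j + 1 - n) (PPart a (ν - n • a i)) := by
  ext j
  simp only [PowerSeries.coeff_derivative, map_sum, PowerSeries.coeff_mk, coeff_PPart]
  rw [mul_comm]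
  exact_mod_cast succ_mul_card_weightTuples a j ν

end WeightTuples

theorem statement1_general {V : Type} [NormedAddCommGroup V] [InnerProductSpace ℝ V]
    (R : RootSystemData V) [Fintype R.weyl]
    {ι : Type} [Fintype ι] (a : ι → V)
    (lam mu : V) :
    PowerSeries.derivative ℤ (R.genKF a lam mu) =
      ∑ i : ι, PowerSeries.mk (fun j : ℕ =>
        ∑ n ∈ Finset.Icc 1 (j + 1),
          PowerSeries.coeff (R := ℤ) (j + 1 - n) (R.genKF a lam (mu + n • a i))) := by
  have shift (w : V ≃ₗ[ℝ] V) (i : ι) (n : ℕ) :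
      w (lam + R.rho) - (mu + n • a i + R.rho) = w (lam + R.rho) - (mu + R.rho) - n • a i := by
    abel
  simp only [RootSystemData.genKF, map_sum, map_zsmul, derivative_PPart, shift]
  ext j
  simp only [map_sum, map_zsmul, PowerSeries.coeff_mk, smul_sum]
  rw [sum_comm]
  exact sum_congr rfl fun i _ => sum_comm

/-- For a finite multiset `Ψ = (a i)` of weights in an open half-space,
the generalised Kostka–Foulkes polynomial
`m^μ_{λ,Ψ}(q) = Σ_{w∈W} (-1)^{ℓ(w)} P_{Ψ,q}(w(λ+ρ) - (μ+ρ))` satisfies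
`d/dq m^μ_{λ,Ψ}(q) = Σ_{γ∈Ψ} Σ_{n≥1} q^{n-1} m^{μ+nγ}_{λ,Ψ}(q)`. -/
theorem statement1 {V : Type} [NormedAddCommGroup V] [InnerProductSpace ℝ V]
    (R : RootSystemData V) [Fintype R.weyl]
    {ι : Type} [Fintype ι] (a : ι → V)
    (hhalf : ∃ f : V →ₗ[ℝ] ℝ, ∀ i, 0 < f (a i))
    (lam mu : V) (hlam : R.Dominant lam) :
    PowerSeries.derivative ℤ (R.genKF a lam mu) =
      ∑ i : ι, PowerSeries.mk (fun j : ℕ =>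
        ∑ n ∈ Finset.Icc 1 (j + 1),
          PowerSeries.coeff (R := ℤ) (j + 1 - n) (R.genKF a lam (mu + n • a i))) :=
  statement1_general R a lam mu
end
end

section
/- Let Δ be a reduced irreducible root system with two root lengths, W its Weyl group, W_l the subgroup generated by all reflections in long roots, and W(Π_s) the subgroup generated by the reflections in short simple roots. Then W_l is normal in W and W is the semi-direct product W(Π_s) ⋉ W_l. -/
noncomputable section
open Finset
open scoped RealInnerProductSpace

attribute [local instance] Classical.propDecidable

variable (V : Type) [NormedAddCommGroup V] [InnerProductSpace ℝ V]

variable {V}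

/-! Conjugating the reflection in a long root by an element of `W` gives the reflection in another
long root, so `W_l` is normal. `W` is generated by the simple reflections, each of which is short or
long, so `W = W(Π_s) W_l`. A short simple reflection permutes the long positive roots, hence so does
all of `W(Π_s)`. The long roots form a root system whose positive roots are `Δ⁺_l` and whose Weyl
group is `W_l`, and by the exchange condition the only element of a Weyl group that preserves the
positive roots is `1`; hence `W(Π_s) ∩ W_l = 1`. -/

section Reflection

theorem involutive_preReflection_inner (α : V) :
    Function.Involutive (Module.preReflection α ((2 / ⟪α, α⟫) • innerₛₗ ℝ α)) := by
  by_cases hα : α = 0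
  · subst hα
    intro x
    simp [Module.preReflection_apply]
  · refine Module.involutive_preReflection ?_
    have : ⟪α, α⟫ ≠ 0 := inner_self_ne_zero.mpr hα
    simp [field]

/-- The formula makes sense for every `α`; at `α = 0` it is the identity, since `x / 0 = 0`. -/
def orthReflection (α : V) : V ≃ₗ[ℝ] V :=
  LinearEquiv.ofInvolutive _ (involutive_preReflection_inner α)

theorem orthReflection_apply (α x : V) :
    orthReflection α x = x - (2 * ⟪α, x⟫ / ⟪α, α⟫) • α := by
  simp [orthReflection, Module.preReflection_apply, mul_div_right_comm]

theorem orthReflection_orthReflection (α x : V) : orthReflection α (orthReflection α x) = x :=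
  involutive_preReflection_inner α x

theorem orthReflection_mul_self (α : V) : orthReflection α * orthReflection α = 1 :=
  LinearEquiv.ext (orthReflection_orthReflection α)

theorem orthReflection_inv (α : V) : (orthReflection α)⁻¹ = orthReflection α :=
  inv_eq_of_mul_eq_one_right (orthReflection_mul_self α)

theorem orthReflection_self {α : V} (hα : α ≠ 0) : orthReflection α α = -α := by
  have : ⟪α, α⟫ ≠ 0 := inner_self_ne_zero.mpr hα
  rw [orthReflection_apply, mul_div_assoc, div_self this, mul_one, two_smul]
  abel

theorem orthReflection_neg (α : V) : orthReflection (-α) = orthReflection α := by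
  ext x
  simp [orthReflection_apply, neg_div]

theorem inner_orthReflection (α x y : V) :
    ⟪orthReflection α x, orthReflection α y⟫ = ⟪x, y⟫ := by
  by_cases hα : α = 0
  · simp [hα, orthReflection_apply]
  have : ⟪α, α⟫ ≠ 0 := inner_self_ne_zero.mpr hα
  simp only [orthReflection_apply, inner_sub_left, inner_sub_right, real_inner_smul_left,
    real_inner_smul_right, real_inner_comm x α, real_inner_comm y α]
  field_simp
  ring

theorem conj_orthReflection {g : V ≃ₗ[ℝ] V} (hg : ∀ x y, ⟪g x, g y⟫ = ⟪x, y⟫) (α : V) :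
    g * orthReflection α * g⁻¹ = orthReflection (g α) := by
  ext x
  have h : ⟪α, g.symm x⟫ = ⟪g α, x⟫ := by rw [← hg, g.apply_symm_apply]
  change g (orthReflection α (g.symm x)) = orthReflection (g α) x
  rw [orthReflection_apply, orthReflection_apply, map_sub, map_smul, g.apply_symm_apply, h, hg]

def orthReflProd (l : List V) : V ≃ₗ[ℝ] V := (l.map orthReflection).prod

@[simp]
theorem orthReflProd_cons (α : V) (l : List V) :
    orthReflProd (α :: l) = orthReflection α * orthReflProd l := by
  simp [orthReflProd]

theorem orthReflProd_concat (l : List V) (α : V) :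
    orthReflProd (l ++ [α]) = orthReflProd l * orthReflection α := by
  simp [orthReflProd]

end Reflection

namespace RootSystemData

variable (R : RootSystemData V)

theorem isReflectionIn_iff {S : Finset V} {g : V ≃ₗ[ℝ] V} :
    IsReflectionIn S g ↔ ∃ α ∈ S, g = orthReflection α := by
  simp only [IsReflectionIn, LinearEquiv.ext_iff, orthReflection_apply]

theorem orthReflection_mem_closure {S : Finset V} {α : V} (hα : α ∈ S) :
    orthReflection α ∈ Subgroup.closure {g | IsReflectionIn S g} :=
  Subgroup.subset_closure (isReflectionIn_iff.mpr ⟨α, hα, rfl⟩)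

theorem ne_zero_of_mem {α : V} (hα : α ∈ R.Δ) : α ≠ 0 := fun h => R.nonzero (h ▸ hα)

theorem inner_self_pos {α : V} (hα : α ∈ R.Δ) : 0 < ⟪α, α⟫ :=
  real_inner_self_pos.mpr (R.ne_zero_of_mem hα)

theorem orthReflection_mem {α β : V} (hα : α ∈ R.Δ) (hβ : β ∈ R.Δ) :
    orthReflection α β ∈ R.Δ := by
  rw [orthReflection_apply]
  exact R.reflect_mem α hα β hβ

def IsSymmetry (w : V ≃ₗ[ℝ] V) : Prop :=
  (∀ x y, ⟪w x, w y⟫ = ⟪x, y⟫) ∧ ∀ α ∈ R.Δ, w α ∈ R.Δ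

theorem isSymmetry_one : R.IsSymmetry 1 :=
  ⟨fun _ _ => rfl, fun _ h => h⟩

theorem isSymmetry_orthReflection {α : V} (hα : α ∈ R.Δ) : R.IsSymmetry (orthReflection α) :=
  ⟨inner_orthReflection α, fun _ hβ => R.orthReflection_mem hα hβ⟩

variable {R} in
theorem IsSymmetry.mul {v w : V ≃ₗ[ℝ] V} (hv : R.IsSymmetry v) (hw : R.IsSymmetry w) :
    R.IsSymmetry (v * w) :=
  ⟨fun x y => (hv.1 _ _).trans (hw.1 x y), fun _ hβ => hv.2 _ (hw.2 _ hβ)⟩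

theorem pos_subset : R.pos ⊆ R.Δ := filter_subset _ _

theorem simples_subset_pos : R.simples ⊆ R.pos := filter_subset _ _

theorem simples_subset : R.simples ⊆ R.Δ := R.simples_subset_pos.trans R.pos_subset

theorem pol_pos {α : V} (hα : α ∈ R.pos) : 0 < R.pol α := (mem_filter.mp hα).2

theorem mem_pos_or_neg_mem_pos {α : V} (hα : α ∈ R.Δ) : α ∈ R.pos ∨ -α ∈ R.pos := by
  simp only [pos, mem_filter, map_neg, neg_pos, R.neg_mem α hα, hα, true_and]
  exact (R.pol_ne α hα).lt_or_gt.symm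

theorem neg_notMem_pos {α : V} (hα : α ∈ R.pos) : -α ∉ R.pos := fun h => by
  have := R.pol_pos h
  rw [map_neg] at this
  linarith [R.pol_pos hα]

theorem pos_induction {P : V → Prop}
    (h : ∀ β ∈ R.pos, (∀ γ ∈ R.pos, R.pol γ < R.pol β → P γ) → P β) :
    ∀ β ∈ R.pos, P β := by
  by_contra! hbad
  obtain ⟨β, hβ, hmin⟩ := (R.pos.filter (¬ P ·)).exists_min_image R.pol
    (by simpa [Finset.Nonempty] using hbad)
  rw [mem_filter] at hβ
  refine hβ.2 (h β hβ.1 fun γ hγ hlt => ?_)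
  by_contra hγP
  exact (hmin γ (mem_filter.mpr ⟨hγ, hγP⟩)).not_gt hlt

theorem exists_nonneg_coeffs_of_mem_pos :
    ∀ β ∈ R.pos, ∃ c : V → ℝ, (∀ γ, 0 ≤ c γ) ∧ β = ∑ γ ∈ R.simples, c γ • γ := by
  refine R.pos_induction fun β hβ ih => ?_
  by_cases hs : β ∈ R.simples
  · refine ⟨fun γ => if γ = β then 1 else 0, fun γ => by positivity, ?_⟩
    simp [ite_smul, hs]
  · obtain ⟨γ, hγ, δ, hδ, rfl⟩ : ∃ γ ∈ R.pos, ∃ δ ∈ R.pos, γ + δ = β := by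
      by_contra h
      exact hs (mem_filter.mpr ⟨hβ, h⟩)
    have hγp := R.pol_pos hγ
    have hδp := R.pol_pos hδ
    obtain ⟨c, hc, rfl⟩ := ih γ hγ (by rw [map_add]; linarith)
    obtain ⟨d, hd, hdsum⟩ := ih δ hδ (by rw [map_add]; linarith)
    refine ⟨c + d, fun x => add_nonneg (hc x) (hd x), ?_⟩
    simp [hdsum, add_smul, sum_add_distrib]

theorem inner_mul_inner_lt {α β : V} (hα : α ∈ R.Δ) (hβ : β ∈ R.Δ) (hne : β ≠ α)
    (hne' : β ≠ -α) : ⟪α, β⟫ * ⟪α, β⟫ < ⟪α, α⟫ * ⟪β, β⟫ := by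
  refine (real_inner_mul_inner_self_le α β).lt_of_ne fun h => ?_
  obtain ⟨r, -, rfl⟩ := (norm_inner_eq_norm_iff (𝕜 := ℝ) (R.ne_zero_of_mem hα)
    (R.ne_zero_of_mem hβ)).mp <| by
    rw [← sq_eq_sq₀ (norm_nonneg _) (by positivity), mul_pow, Real.norm_eq_abs, sq_abs,
      ← real_inner_self_eq_norm_sq, ← real_inner_self_eq_norm_sq, sq, h]
  rcases R.reduced α hα r hβ with rfl | rfl <;> simp_all

/-- The Cartan integers of two non-proportional roots with `⟪α, β⟫ > 0` have product `< 4`, so one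
of them is `1`, and the corresponding reflection produces `±(α - β)`. -/
theorem sub_mem_of_inner_pos {α β : V} (hα : α ∈ R.Δ) (hβ : β ∈ R.Δ) (hne : β ≠ α)
    (hne' : β ≠ -α) (hip : 0 < ⟪α, β⟫) : α - β ∈ R.Δ := by
  obtain ⟨m, hm⟩ := R.crys α hα β hβ
  obtain ⟨n, hn⟩ := R.crys β hβ α hα
  have hA := R.inner_self_pos hα
  have hB := R.inner_self_pos hβ
  rw [real_inner_comm] at hn
  have hm0 : (0 : ℤ) < m := by exact_mod_cast hm ▸ (by positivity : (0 : ℝ) < 2 * ⟪α, β⟫ / ⟪α, α⟫)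
  have hn0 : (0 : ℤ) < n := by exact_mod_cast hn ▸ (by positivity : (0 : ℝ) < 2 * ⟪α, β⟫ / ⟪β, β⟫)
  have hmn : m * n < 4 := by
    have hprod : (m : ℝ) * n * (⟪α, α⟫ * ⟪β, β⟫) = 4 * (⟪α, β⟫ * ⟪α, β⟫) := by
      rw [← hm, ← hn]
      field_simp
      ring
    have := R.inner_mul_inner_lt hα hβ hne hne'
    have : (m : ℝ) * n < 4 := by nlinarith
    exact_mod_cast this
  rcases (show m = 1 ∨ n = 1 by by_contra! h; nlinarith [h.1.lt_of_le' hm0, h.2.lt_of_le' hn0])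
    with h1 | h1
  · have := R.neg_mem _ (R.reflect_mem α hα β hβ)
    rwa [hm, h1, Int.cast_one, one_smul, neg_sub] at this
  · have := R.reflect_mem β hβ α hα
    rwa [real_inner_comm, hn, h1, Int.cast_one, one_smul] at this

theorem inner_simples_nonpos {α β : V} (hα : α ∈ R.simples) (hβ : β ∈ R.simples)
    (hne : α ≠ β) : ⟪α, β⟫ ≤ 0 := by
  by_contra! h
  have hαp := R.simples_subset_pos hα
  have hβp := R.simples_subset_pos hβ
  have hsub := R.sub_mem_of_inner_pos (R.pos_subset hαp) (R.pos_subset hβp) hne.symm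
    (by rintro rfl; exact R.neg_notMem_pos hαp hβp) h
  rcases R.mem_pos_or_neg_mem_pos hsub with hp | hp
  · exact (mem_filter.mp hα).2 ⟨β, hβp, α - β, hp, by abel⟩
  · exact (mem_filter.mp hβ).2 ⟨α, hαp, -(α - β), hp, by abel⟩

theorem eq_zero_of_pol_sum_nonpos {s : Finset V} (hs : s ⊆ R.pos) {c : V → ℝ}
    (hc : ∀ γ, 0 ≤ c γ) (h : R.pol (∑ γ ∈ s, c γ • γ) ≤ 0) : ∀ γ ∈ s, c γ = 0 := by
  have hterm : ∀ γ ∈ s, 0 ≤ c γ * R.pol γ := fun γ hγ => mul_nonneg (hc γ) (R.pol_pos (hs hγ)).le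
  simp only [map_sum, map_smul, smul_eq_mul] at h
  have hzero := (sum_eq_zero_iff_of_nonneg hterm).mp (le_antisymm h (sum_nonneg hterm))
  exact fun γ hγ => (mul_eq_zero.mp (hzero γ hγ)).resolve_right (R.pol_pos (hs hγ)).ne'

/-- If `s_α β` were negative, the simple roots other than `α` would combine with non-negative
coefficients to `t • α`: pairing with `α` forces `t ≤ 0`, applying `pol` then forces all those
coefficients to vanish, and `β` would be a multiple of `α`. -/
theorem orthReflection_mem_pos {α β : V} (hα : α ∈ R.simples) (hβ : β ∈ R.pos) (hne : β ≠ α) :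
    orthReflection α β ∈ R.pos := by
  have hαΔ := R.simples_subset hα
  have hβΔ := R.pos_subset hβ
  refine (R.mem_pos_or_neg_mem_pos (R.orthReflection_mem hαΔ hβΔ)).resolve_right fun hneg => ?_
  obtain ⟨b, hb, hbsum⟩ := R.exists_nonneg_coeffs_of_mem_pos β hβ
  obtain ⟨d, hd, hdsum⟩ := R.exists_nonneg_coeffs_of_mem_pos _ hneg
  rw [orthReflection_apply] at hdsum
  set t := 2 * ⟪α, β⟫ / ⟪α, α⟫ - b α - d α
  have hbd : ∀ γ, 0 ≤ b γ + d γ := fun γ => add_nonneg (hb γ) (hd γ)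
  have hu : ∑ γ ∈ R.simples.erase α, (b γ + d γ) • γ = t • α := by
    have hb' := add_sum_erase R.simples (fun γ => b γ • γ) hα
    have hd' := add_sum_erase R.simples (fun γ => d γ • γ) hα
    simp only [add_smul, sum_add_distrib]
    rw [eq_sub_of_add_eq' hb', eq_sub_of_add_eq' hd', ← hbsum, ← hdsum]
    module
  have ht : t ≤ 0 := by
    have hinner : ⟪∑ γ ∈ R.simples.erase α, (b γ + d γ) • γ, α⟫ ≤ 0 := by
      rw [sum_inner]
      refine sum_nonpos fun γ hγ => ?_
      rw [real_inner_smul_left]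
      exact mul_nonpos_of_nonneg_of_nonpos (hbd γ)
        (R.inner_simples_nonpos (mem_of_mem_erase hγ) hα (ne_of_mem_erase hγ))
    rw [hu, real_inner_smul_left] at hinner
    nlinarith [R.inner_self_pos hαΔ]
  have hpol : R.pol (t • α) ≤ 0 := by
    rw [map_smul, smul_eq_mul]
    exact mul_nonpos_of_nonpos_of_nonneg ht (R.pol_pos (R.simples_subset_pos hα)).le
  have hzero := R.eq_zero_of_pol_sum_nonpos ((erase_subset _ _).trans R.simples_subset_pos) hbd
    (hu ▸ hpol)
  have hβα : β = b α • α := by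
    rw [hbsum, ← add_sum_erase _ _ hα, add_eq_left]
    refine sum_eq_zero fun γ hγ => ?_
    rw [show b γ = 0 by linarith [hzero γ hγ, hb γ, hd γ], zero_smul]
  rcases R.reduced α hαΔ (b α) (hβα ▸ hβΔ) with h1 | h1
  · exact hne (by rw [hβα, h1, one_smul])
  · linarith [hb α]

def simpleWeyl : Subgroup (V ≃ₗ[ℝ] V) := Subgroup.closure {g | IsReflectionIn R.simples g}

theorem exists_simple_inner_pos {β : V} (hβ : β ∈ R.pos) : ∃ α ∈ R.simples, 0 < ⟪α, β⟫ := by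
  obtain ⟨c, hc, hcsum⟩ := R.exists_nonneg_coeffs_of_mem_pos β hβ
  by_contra! h
  have hββ : ⟪β, β⟫ ≤ 0 := by
    nth_rewrite 1 [hcsum]
    rw [sum_inner]
    exact sum_nonpos fun γ hγ => by
      rw [real_inner_smul_left]
      exact mul_nonpos_of_nonneg_of_nonpos (hc γ) (h γ hγ)
  exact hββ.not_gt (R.inner_self_pos (R.pos_subset hβ))

/-- Induction on `pol β`: if `β` is not simple, some simple `α` has `⟪α, β⟫ > 0`, and then
`s_α β` is a lower positive root with `s_β = s_α s_{s_α β} s_α`. -/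
theorem orthReflection_mem_simpleWeyl_of_mem_pos :
    ∀ β ∈ R.pos, orthReflection β ∈ R.simpleWeyl := by
  refine R.pos_induction fun β hβ ih => ?_
  by_cases hs : β ∈ R.simples
  · exact orthReflection_mem_closure hs
  obtain ⟨α, hα, hαβ⟩ := R.exists_simple_inner_pos hβ
  have hβ' := R.orthReflection_mem_pos hα hβ fun h => hs (h ▸ hα)
  have hlt : R.pol (orthReflection α β) < R.pol β := by
    have := mul_pos (div_pos (mul_pos two_pos hαβ) (R.inner_self_pos (R.simples_subset hα)))
      (R.pol_pos (R.simples_subset_pos hα))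
    rw [orthReflection_apply, map_sub, map_smul, smul_eq_mul]
    linarith
  have hconj := conj_orthReflection (inner_orthReflection α) (orthReflection α β)
  rw [orthReflection_orthReflection] at hconj
  rw [← hconj]
  have hαmem : orthReflection α ∈ R.simpleWeyl := orthReflection_mem_closure hα
  exact mul_mem (mul_mem hαmem (ih _ hβ' hlt)) (inv_mem hαmem)

theorem weyl_le_simpleWeyl : R.weyl ≤ R.simpleWeyl := by
  refine (Subgroup.closure_le _).mpr fun g hg => ?_
  obtain ⟨β, hβ, rfl⟩ := isReflectionIn_iff.mp hg
  rcases R.mem_pos_or_neg_mem_pos hβ with h | h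
  · exact R.orthReflection_mem_simpleWeyl_of_mem_pos β h
  · simpa [orthReflection_neg] using R.orthReflection_mem_simpleWeyl_of_mem_pos _ h

theorem exists_orthReflProd_eq {S : Finset V} {w : V ≃ₗ[ℝ] V}
    (hw : w ∈ Subgroup.closure {g | IsReflectionIn S g}) :
    ∃ l : List V, (∀ γ ∈ l, γ ∈ S) ∧ orthReflProd l = w := by
  induction hw using Subgroup.closure_induction_left with
  | one => exact ⟨[], by simp, rfl⟩
  | mul_left g hg w _ ih | inv_mul_cancel g hg w _ ih =>
    obtain ⟨α, hα, rfl⟩ := isReflectionIn_iff.mp hg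
    obtain ⟨l, hl, rfl⟩ := ih
    exact ⟨α :: l, List.forall_mem_cons.mpr ⟨hα, hl⟩, by simp [orthReflection_inv]⟩

theorem isSymmetry_orthReflProd {l : List V} (hl : ∀ γ ∈ l, γ ∈ R.Δ) :
    R.IsSymmetry (orthReflProd l) := by
  induction l with
  | nil => exact R.isSymmetry_one
  | cons α l ih =>
    rw [orthReflProd_cons]
    exact (R.isSymmetry_orthReflection (hl α List.mem_cons_self)).mul
      (ih fun γ hγ => hl γ (List.mem_cons_of_mem α hγ))

theorem isSymmetry_of_mem_weyl {w : V ≃ₗ[ℝ] V} (hw : w ∈ R.weyl) : R.IsSymmetry w := by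
  obtain ⟨l, hl, rfl⟩ := exists_orthReflProd_eq (R.weyl_le_simpleWeyl hw)
  exact R.isSymmetry_orthReflProd fun γ hγ => R.simples_subset (hl γ hγ)

theorem exists_orthReflProd_mul_orthReflection_eq (m : List V) (hm : ∀ β ∈ m, β ∈ R.simples)
    {α : V} (hα : α ∈ R.simples) (hneg : -(orthReflProd m α) ∈ R.pos) :
    ∃ m' : List V, (∀ β ∈ m', β ∈ R.simples) ∧ m'.length + 1 = m.length ∧
      orthReflProd m * orthReflection α = orthReflProd m' := by
  induction m with
  | nil => exact absurd hneg (R.neg_notMem_pos (R.simples_subset_pos hα))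
  | cons β t ih =>
    have hβ : β ∈ R.simples := hm β List.mem_cons_self
    have ht : ∀ γ ∈ t, γ ∈ R.simples := fun γ hγ => hm γ (List.mem_cons_of_mem β hγ)
    by_cases hc : -(orthReflProd t α) ∈ R.pos
    · obtain ⟨m', hm', hlen, heq⟩ := ih ht hc
      refine ⟨β :: m', ?_, by simp [hlen], by rw [orthReflProd_cons, orthReflProd_cons,
        mul_assoc, heq]⟩
      simpa [hβ] using hm'
    · -- `s_β` is the letter that turns `orthReflProd t α` negative, so it must be that root.
      have hsym := R.isSymmetry_orthReflProd fun γ hγ => R.simples_subset (ht γ hγ)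
      have hp : orthReflProd t α ∈ R.pos :=
        (R.mem_pos_or_neg_mem_pos (hsym.2 α (R.simples_subset hα))).resolve_right hc
      have heqβ : orthReflProd t α = β := by
        by_contra hne
        rw [orthReflProd_cons, LinearEquiv.mul_apply] at hneg
        exact R.neg_notMem_pos (R.orthReflection_mem_pos hβ hp hne) hneg
      refine ⟨t, ht, by simp, ?_⟩
      rw [orthReflProd_cons, ← heqβ, ← conj_orthReflection hsym.1, inv_mul_cancel_right,
        mul_assoc, orthReflection_mul_self, mul_one]

theorem orthReflProd_eq_one_of_mapsTo_pos (l : List V) (hl : ∀ β ∈ l, β ∈ R.simples)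
    (hpos : ∀ β ∈ R.pos, orthReflProd l β ∈ R.pos) : orthReflProd l = 1 := by
  induction hlen : l.length using Nat.strong_induction_on generalizing l with
  | _ n ih =>
    rcases l.eq_nil_or_concat with rfl | ⟨m, α, rfl⟩
    · rfl
    simp only [List.concat_eq_append] at hl hlen hpos ⊢
    have hα : α ∈ R.simples := hl α (by simp)
    have hneg : -(orthReflProd m α) ∈ R.pos := by
      have := hpos α (R.simples_subset_pos hα)
      rwa [orthReflProd_concat, LinearEquiv.mul_apply,
        orthReflection_self (R.ne_zero_of_mem (R.simples_subset hα)), map_neg] at this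
    obtain ⟨m', hm', hlen', heq⟩ := R.exists_orthReflProd_mul_orthReflection_eq m
      (fun β hβ => hl β (by simp [hβ])) hα hneg
    rw [orthReflProd_concat, heq] at hpos ⊢
    exact ih m'.length (by simp only [List.length_append, List.length_singleton] at hlen; omega) m' hm' hpos rfl

theorem eq_one_of_mem_weyl_of_mapsTo_pos {w : V ≃ₗ[ℝ] V} (hw : w ∈ R.weyl)
    (hpos : ∀ β ∈ R.pos, w β ∈ R.pos) : w = 1 := by
  obtain ⟨l, hl, rfl⟩ := exists_orthReflProd_eq (R.weyl_le_simpleWeyl hw)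
  exact R.orthReflProd_eq_one_of_mapsTo_pos l hl hpos

theorem long_subset : R.long ⊆ R.Δ := filter_subset _ _

theorem mem_short_or_mem_long {α : V} (hα : α ∈ R.Δ) : α ∈ R.short ∨ α ∈ R.long := by
  simp only [short, long, mem_filter, hα, true_and]
  by_cases h : ∀ β ∈ R.Δ, ‖α‖ ≤ ‖β‖
  · exact Or.inl h
  · exact Or.inr (by simpa using h)

theorem notMem_long_of_mem_short {α : V} (hs : α ∈ R.short) : α ∉ R.long := fun hl => by
  obtain ⟨β, hβ, hlt⟩ := (mem_filter.mp hl).2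
  exact hlt.not_ge ((mem_filter.mp hs).2 β hβ)

variable {R} in
theorem IsSymmetry.mem_long {w : V ≃ₗ[ℝ] V} (hw : R.IsSymmetry w) {β : V} (hβ : β ∈ R.long) :
    w β ∈ R.long := by
  have hnorm : ‖w β‖ = ‖β‖ := by
    rw [← sq_eq_sq₀ (norm_nonneg _) (norm_nonneg _), ← real_inner_self_eq_norm_sq,
      ← real_inner_self_eq_norm_sq, hw.1]
  obtain ⟨hβΔ, hlong⟩ := mem_filter.mp hβ
  exact mem_filter.mpr ⟨hw.2 β hβΔ, hnorm ▸ hlong⟩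

def longRoots : RootSystemData V where
  Δ := R.long
  pol := R.pol
  nonzero := fun h => R.nonzero (R.long_subset h)
  neg_mem := fun α hα => by
    rw [← orthReflection_self (R.ne_zero_of_mem (R.long_subset hα))]
    exact (R.isSymmetry_orthReflection (R.long_subset hα)).mem_long hα
  reduced := fun α hα t ht => R.reduced α (R.long_subset hα) t (R.long_subset ht)
  crys := fun α hα β hβ => R.crys α (R.long_subset hα) β (R.long_subset hβ)
  reflect_mem := fun α hα β hβ => by
    simpa [orthReflection_apply] using
      (R.isSymmetry_orthReflection (R.long_subset hα)).mem_long hβ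
  pol_ne := fun α hα => R.pol_ne α (R.long_subset hα)

theorem longRoots_pos : R.longRoots.pos = R.posL := by
  ext β
  change β ∈ R.long.filter _ ↔ β ∈ R.Δ.filter _ ∩ R.long
  simp only [mem_filter, mem_inter]
  exact ⟨fun ⟨h1, h2⟩ => ⟨⟨R.long_subset h1, h2⟩, h1⟩, fun ⟨⟨_, h2⟩, h1⟩ => ⟨h1, h2⟩⟩

theorem weylS_le_weyl : R.weylS ≤ R.weyl :=
  Subgroup.closure_mono fun _ ⟨α, hα, h⟩ => ⟨α, R.simples_subset (mem_inter.mp hα).1, h⟩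

theorem weylL_le_weyl : R.weylL ≤ R.weyl :=
  Subgroup.closure_mono fun _ ⟨α, hα, h⟩ => ⟨α, R.long_subset hα, h⟩

theorem conj_mem_weylL {w x : V ≃ₗ[ℝ] V} (hw : w ∈ R.weyl) (hx : x ∈ R.weylL) :
    w * x * w⁻¹ ∈ R.weylL := by
  suffices R.weylL.map (MulAut.conj w).toMonoidHom ≤ R.weylL from this ⟨x, hx, rfl⟩
  rw [weylL, MonoidHom.map_closure]
  refine Subgroup.closure_mono ?_
  rintro _ ⟨g, hg, rfl⟩
  obtain ⟨β, hβ, rfl⟩ := isReflectionIn_iff.mp hg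
  have hsym := R.isSymmetry_of_mem_weyl hw
  exact isReflectionIn_iff.mpr ⟨w β, hsym.mem_long hβ, conj_orthReflection hsym.1 β⟩

theorem orthReflection_mem_posL {α β : V} (hα : α ∈ R.simplesS) (hβ : β ∈ R.posL) :
    orthReflection α β ∈ R.posL := by
  obtain ⟨hαs, hαshort⟩ := mem_inter.mp hα
  obtain ⟨hβpos, hβlong⟩ := mem_inter.mp hβ
  refine mem_inter.mpr ⟨R.orthReflection_mem_pos hαs hβpos ?_,
    (R.isSymmetry_orthReflection (R.simples_subset hαs)).mem_long hβlong⟩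
  rintro rfl
  exact R.notMem_long_of_mem_short hαshort hβlong

theorem mapsTo_posL_of_mem_weylS {w : V ≃ₗ[ℝ] V} (hw : w ∈ R.weylS) :
    ∀ β ∈ R.posL, w β ∈ R.posL := by
  induction hw using Subgroup.closure_induction_left with
  | one => exact fun β hβ => hβ
  | mul_left g hg w _ ih =>
    obtain ⟨α, hα, rfl⟩ := isReflectionIn_iff.mp hg
    exact fun β hβ => R.orthReflection_mem_posL hα (ih β hβ)
  | inv_mul_cancel g hg w _ ih =>
    obtain ⟨α, hα, rfl⟩ := isReflectionIn_iff.mp hg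
    rw [orthReflection_inv]
    exact fun β hβ => R.orthReflection_mem_posL hα (ih β hβ)

theorem weylS_inf_weylL : R.weylS ⊓ R.weylL = ⊥ := by
  refine eq_bot_iff.mpr fun w ⟨hwS, hwL⟩ => Subgroup.mem_bot.mpr ?_
  refine R.longRoots.eq_one_of_mem_weyl_of_mapsTo_pos hwL ?_
  rw [longRoots_pos]
  exact R.mapsTo_posL_of_mem_weylS hwS

theorem weylS_sup_weylL : R.weylS ⊔ R.weylL = R.weyl := by
  refine le_antisymm (sup_le R.weylS_le_weyl R.weylL_le_weyl)
    (R.weyl_le_simpleWeyl.trans ((Subgroup.closure_le _).mpr fun g hg => ?_))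
  obtain ⟨α, hα, rfl⟩ := isReflectionIn_iff.mp hg
  rcases R.mem_short_or_mem_long (R.simples_subset hα) with h | h
  · exact Subgroup.mem_sup_left (orthReflection_mem_closure (mem_inter.mpr ⟨hα, h⟩))
  · exact Subgroup.mem_sup_right (orthReflection_mem_closure h)

end RootSystemData

theorem statement3_general {V : Type} [NormedAddCommGroup V] [InnerProductSpace ℝ V]
    (R : RootSystemData V) :
    (R.weylL.subgroupOf R.weyl).Normal ∧
      R.weylS.subgroupOf R.weyl ⊓ R.weylL.subgroupOf R.weyl = ⊥ ∧
      R.weylS.subgroupOf R.weyl ⊔ R.weylL.subgroupOf R.weyl = ⊤ := by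
  refine ⟨⟨fun x hx w => R.conj_mem_weylL w.2 hx⟩, ?_, ?_⟩
  · refine (Subgroup.comap_inf R.weylS R.weylL R.weyl.subtype).symm.trans ?_
    rw [R.weylS_inf_weylL]
    exact Subgroup.bot_subgroupOf _
  · rw [← Subgroup.subgroupOf_sup R.weylS_le_weyl R.weylL_le_weyl, R.weylS_sup_weylL]
    exact Subgroup.subgroupOf_self _

/-- For an irreducible root system with two root lengths, `W_l` is a
normal subgroup of `W`, and `W` is the (internal) semidirect product `W(Π_s) ⋉ W_l`:
inside `W`, the subgroup `W_l` is normal, `W(Π_s) ∩ W_l = 1` and `W(Π_s) · W_l = W`. -/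
theorem statement3 {V : Type} [NormedAddCommGroup V] [InnerProductSpace ℝ V]
    [FiniteDimensional ℝ V] (R : RootSystemData V)
    (hirr : R.IsIrreducible) (h2 : R.TwoLengths) (hsp : R.Spans) :
    (R.weylL.subgroupOf R.weyl).Normal ∧
      R.weylS.subgroupOf R.weyl ⊓ R.weylL.subgroupOf R.weyl = ⊥ ∧
      R.weylS.subgroupOf R.weyl ⊔ R.weylL.subgroupOf R.weyl = ⊤ :=
  statement3_general R
end
end
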